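/- (Theorem 1, first covariance relation.) Let D ⊆ ℂ be open, let B, Ψ, F, F⁺, ω_{F,F⁺}, ω_{Ψ,F⁺} : D → Matrix (Fin N) (Fin N) ℂ be real-differentiable, and assume on D: (i) ∂_z̄ Ψ + B·conj(Ψ) = 0 and ∂_z̄ F + B·conj(F) = 0; (ii) ∂_z F⁺ − conj(F⁺)·B = 0; (iii) ∂_z̄ ω_{F,F⁺} = F⁺·conj(F), ∂_z ω_{F,F⁺} = − conj(F⁺)·F, and conj(ω_{F,F⁺}) = − ω_{F,F⁺} (pure imaginary); (iv) ∂_z̄ ω_{Ψ,F⁺} = F⁺·conj(Ψ), ∂_z ω_{Ψ,F⁺} = − conj(F⁺)·Ψ, and conj(ω_{Ψ,F⁺}) = − ω_{Ψ,F⁺}; (v) ω_{F,F⁺}(z) is invertible for every z ∈ D. Define Ψ̃ = Ψ − F · ω_{F,F⁺}⁻¹ · ω_{Ψ,F⁺} and B̃ = B + F · ω_{F,F⁺}⁻¹ · F⁺. Then ∂_z̄ Ψ̃ + B̃ · conj(Ψ̃) = 0 on D. -/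

import Mathlib

/-! Write Ω = ω_{F,F⁺} and ω = ω_{Ψ,F⁺}. Both are purely imaginary, so conj(Ω⁻¹ω) = Ω⁻¹ω and
conj Ψ̃ = conj Ψ − conj F · Ω⁻¹ω. Expanding ∂_z̄ Ψ̃ by the Leibniz rule, with
∂_z̄(Ω⁻¹) = −Ω⁻¹ (∂_z̄ Ω) Ω⁻¹ obtained by differentiating Ω Ω⁻¹ = 1, and substituting the
given values of ∂_z̄ Ψ, ∂_z̄ F, ∂_z̄ Ω and ∂_z̄ ω, its four terms cancel the four terms of
B̃ · conj Ψ̃. -/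

open Complex Matrix

/-- Entrywise Wirtinger derivative ∂_z f = (1/2)(∂f/∂x − i ∂f/∂y). -/
noncomputable def wDz {N : ℕ} (f : ℂ → Matrix (Fin N) (Fin N) ℂ) (z : ℂ) :
    Matrix (Fin N) (Fin N) ℂ :=
  Matrix.of fun i j =>
    (1 / 2 : ℂ) * (fderiv ℝ (fun w => f w i j) z 1
      - Complex.I * fderiv ℝ (fun w => f w i j) z Complex.I)

/-- Entrywise Wirtinger derivative ∂_z̄ f = (1/2)(∂f/∂x + i ∂f/∂y). -/
noncomputable def wDzbar {N : ℕ} (f : ℂ → Matrix (Fin N) (Fin N) ℂ) (z : ℂ) :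
    Matrix (Fin N) (Fin N) ℂ :=
  Matrix.of fun i j =>
    (1 / 2 : ℂ) * (fderiv ℝ (fun w => f w i j) z 1
      + Complex.I * fderiv ℝ (fun w => f w i j) z Complex.I)

/-- Real-differentiability, entrywise, at every point of `D`. -/
def MatDiffOn {N : ℕ} (f : ℂ → Matrix (Fin N) (Fin N) ℂ) (D : Set ℂ) : Prop :=
  ∀ z ∈ D, ∀ i j, DifferentiableAt ℝ (fun w => f w i j) z

/-- Entrywise complex conjugate of a matrix. -/
def mconj {N : ℕ} (M : Matrix (Fin N) (Fin N) ℂ) : Matrix (Fin N) (Fin N) ℂ :=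
  M.map (starRingEnd ℂ)

open Filter Topology

noncomputable def dzbar (f : ℂ → ℂ) (z : ℂ) : ℂ :=
  (1 / 2 : ℂ) * (fderiv ℝ f z 1 + I * fderiv ℝ f z I)

section Scalar

variable {f g : ℂ → ℂ} {z : ℂ}

theorem dzbar_congr (h : f =ᶠ[𝓝 z] g) : dzbar f z = dzbar g z := by
  rw [dzbar, dzbar, h.fderiv_eq]

theorem dzbar_const (c : ℂ) : dzbar (fun _ => c) z = 0 := by
  simp [dzbar]

theorem dzbar_sub (hf : DifferentiableAt ℝ f z) (hg : DifferentiableAt ℝ g z) :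
    dzbar (fun w => f w - g w) z = dzbar f z - dzbar g z := by
  simp only [dzbar, fderiv_fun_sub hf hg, _root_.sub_apply]
  ring

theorem dzbar_mul (hf : DifferentiableAt ℝ f z) (hg : DifferentiableAt ℝ g z) :
    dzbar (fun w => f w * g w) z = dzbar f z * g z + f z * dzbar g z := by
  simp only [dzbar, fderiv_fun_mul hf hg, _root_.add_apply,
    _root_.smul_apply, smul_eq_mul]
  ring

theorem dzbar_sum {ι : Type*} {s : Finset ι} {f : ι → ℂ → ℂ}
    (hf : ∀ i ∈ s, DifferentiableAt ℝ (f i) z) :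
    dzbar (fun w => ∑ i ∈ s, f i w) z = ∑ i ∈ s, dzbar (f i) z := by
  simp only [dzbar, fderiv_fun_sum hf, _root_.sum_apply, Finset.mul_sum,
    ← Finset.sum_add_distrib]

end Scalar

def MatDiffAt {N : ℕ} (f : ℂ → Matrix (Fin N) (Fin N) ℂ) (z : ℂ) : Prop :=
  ∀ i j, DifferentiableAt ℝ (fun w => f w i j) z

theorem MatDiffOn.matDiffAt {N : ℕ} {f : ℂ → Matrix (Fin N) (Fin N) ℂ} {D : Set ℂ} {z : ℂ}
    (hf : MatDiffOn f D) (hz : z ∈ D) : MatDiffAt f z :=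
  hf z hz

section Matrix

variable {N : ℕ} {f g : ℂ → Matrix (Fin N) (Fin N) ℂ} {z : ℂ}

theorem wDzbar_apply (i j : Fin N) : wDzbar f z i j = dzbar (fun w => f w i j) z := rfl

theorem MatDiffAt.mul (hf : MatDiffAt f z) (hg : MatDiffAt g z) :
    MatDiffAt (fun w => f w * g w) z := fun i j => by
  simp only [Matrix.mul_apply]
  exact DifferentiableAt.fun_sum fun k _ => (hf i k).fun_mul (hg k j)

theorem MatDiffAt.continuousAt (hf : MatDiffAt f z) : ContinuousAt f z :=
  continuousAt_pi.2 fun i => continuousAt_pi.2 fun j => (hf i j).continuousAt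

theorem MatDiffAt.eventually_isUnit (hf : MatDiffAt f z) (hu : IsUnit (f z)) :
    ∀ᶠ w in 𝓝 z, IsUnit (f w) := by
  have hdet : ContinuousAt (fun w => (f w).det) z :=
    continuous_id.matrix_det.continuousAt.comp hf.continuousAt
  filter_upwards [hdet.eventually_ne ((isUnit_iff_isUnit_det _).1 hu).ne_zero] with w hw
  exact (isUnit_iff_isUnit_det _).2 (isUnit_iff_ne_zero.2 hw)

section NormedRing

-- The ℓ∞-operator norm makes matrices a complete normed algebra, where inversion is differentiable.
attribute [local instance] Matrix.linftyOpNormedAddCommGroup Matrix.linftyOpNormedSpace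
  Matrix.linftyOpNormedRing Matrix.linftyOpNormedAlgebra

theorem differentiableAt_iff_matDiffAt : DifferentiableAt ℝ f z ↔ MatDiffAt f z :=
  (Matrix.ofLinearEquiv ℝ).toContinuousLinearEquiv.symm.comp_differentiableAt_iff.symm.trans
    (differentiableAt_pi.trans (forall_congr' fun _ => differentiableAt_pi))

theorem MatDiffAt.inv (hf : MatDiffAt f z) (hu : IsUnit (f z)) :
    MatDiffAt (fun w => (f w)⁻¹) z := by
  have h : (fun w => (f w)⁻¹) = Ring.inverse ∘ f :=
    funext fun w => Matrix.nonsing_inv_eq_ringInverse (f w)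
  rw [← differentiableAt_iff_matDiffAt, h]
  exact (differentiableAt_inverse hu).comp z (differentiableAt_iff_matDiffAt.2 hf)

end NormedRing

theorem wDzbar_congr (h : f =ᶠ[𝓝 z] g) : wDzbar f z = wDzbar g z := by
  ext i j
  exact dzbar_congr (h.mono fun w hw => congrFun (congrFun hw i) j)

theorem wDzbar_const (M : Matrix (Fin N) (Fin N) ℂ) : wDzbar (fun _ => M) z = 0 := by
  ext i j
  exact dzbar_const _

theorem wDzbar_sub (hf : MatDiffAt f z) (hg : MatDiffAt g z) :
    wDzbar (fun w => f w - g w) z = wDzbar f z - wDzbar g z := by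
  ext i j
  exact dzbar_sub (hf i j) (hg i j)

theorem wDzbar_mul (hf : MatDiffAt f z) (hg : MatDiffAt g z) :
    wDzbar (fun w => f w * g w) z = wDzbar f z * g z + f z * wDzbar g z := by
  ext i j
  simp only [wDzbar_apply, Matrix.mul_apply, Matrix.add_apply]
  rw [dzbar_sum fun k _ => (hf i k).fun_mul (hg k j), ← Finset.sum_add_distrib]
  exact Finset.sum_congr rfl fun k _ => dzbar_mul (hf i k) (hg k j)

theorem wDzbar_inv (hf : MatDiffAt f z) (hu : IsUnit (f z)) :
    wDzbar (fun w => (f w)⁻¹) z = -((f z)⁻¹ * wDzbar f z * (f z)⁻¹) := by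
  have hmul : wDzbar f z * (f z)⁻¹ + f z * wDzbar (fun w => (f w)⁻¹) z = 0 := by
    rw [← wDzbar_mul hf (hf.inv hu), ← wDzbar_const (1 : Matrix (Fin N) (Fin N) ℂ) (z := z)]
    exact wDzbar_congr ((hf.eventually_isUnit hu).mono fun w hw =>
      Matrix.mul_nonsing_inv _ ((isUnit_iff_isUnit_det _).1 hw))
  have hdet := (isUnit_iff_isUnit_det _).1 hu
  calc wDzbar (fun w => (f w)⁻¹) z
      = (f z)⁻¹ * (f z * wDzbar (fun w => (f w)⁻¹) z) := by
        rw [← mul_assoc, Matrix.nonsing_inv_mul _ hdet, one_mul]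
    _ = -((f z)⁻¹ * wDzbar f z * (f z)⁻¹) := by
        rw [eq_neg_of_add_eq_zero_right hmul]; noncomm_ring

end Matrix

theorem mconj_mul {N : ℕ} (A C : Matrix (Fin N) (Fin N) ℂ) :
    mconj (A * C) = mconj A * mconj C :=
  Matrix.map_mul

theorem mconj_sub {N : ℕ} (A C : Matrix (Fin N) (Fin N) ℂ) :
    mconj (A - C) = mconj A - mconj C :=
  Matrix.map_sub _ (map_sub _) A C

theorem mconj_inv_of_mconj_eq_neg {N : ℕ} {A : Matrix (Fin N) (Fin N) ℂ} (hA : mconj A = -A)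
    (hu : IsUnit A) : mconj A⁻¹ = -A⁻¹ := by
  have h : mconj A⁻¹ * mconj A = 1 := by
    rw [← mconj_mul, Matrix.nonsing_inv_mul _ ((isUnit_iff_isUnit_det _).1 hu)]
    exact Matrix.map_one _ (map_zero _) (map_one _)
  rw [hA, mul_neg, ← neg_mul] at h
  exact neg_eq_iff_eq_neg.1 (Matrix.inv_eq_left_inv h).symm

theorem moutard_covariance_first_general {N : ℕ} (D : Set ℂ)
    (B Ψ F Fp ωFF ωΨF : ℂ → Matrix (Fin N) (Fin N) ℂ)
    (hΨ : MatDiffOn Ψ D) (hF : MatDiffOn F D)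
    (hωFF : MatDiffOn ωFF D) (hωΨF : MatDiffOn ωΨF D)
    (hΨsys : ∀ z ∈ D, wDzbar Ψ z + B z * mconj (Ψ z) = 0)
    (hFsys : ∀ z ∈ D, wDzbar F z + B z * mconj (F z) = 0)
    (hωFFzbar : ∀ z ∈ D, wDzbar ωFF z = Fp z * mconj (F z))
    (hωFFim : ∀ z ∈ D, mconj (ωFF z) = - ωFF z)
    (hωΨFzbar : ∀ z ∈ D, wDzbar ωΨF z = Fp z * mconj (Ψ z))
    (hωΨFim : ∀ z ∈ D, mconj (ωΨF z) = - ωΨF z)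
    (hinv : ∀ z ∈ D, IsUnit (ωFF z)) :
    ∀ z ∈ D,
      wDzbar (fun w => Ψ w - F w * (ωFF w)⁻¹ * ωΨF w) z
        + (B z + F z * (ωFF z)⁻¹ * Fp z)
          * mconj (Ψ z - F z * (ωFF z)⁻¹ * ωΨF z) = 0 := by
  intro z hz
  have hωinv : MatDiffAt (fun w => (ωFF w)⁻¹) z := (hωFF.matDiffAt hz).inv (hinv z hz)
  have hFωinv : MatDiffAt (fun w => F w * (ωFF w)⁻¹) z := (hF.matDiffAt hz).mul hωinv
  rw [wDzbar_sub (hΨ.matDiffAt hz) (hFωinv.mul (hωΨF.matDiffAt hz)),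
    wDzbar_mul hFωinv (hωΨF.matDiffAt hz), wDzbar_mul (hF.matDiffAt hz) hωinv,
    wDzbar_inv (hωFF.matDiffAt hz) (hinv z hz), hωFFzbar z hz, hωΨFzbar z hz,
    eq_neg_of_add_eq_zero_left (hΨsys z hz), eq_neg_of_add_eq_zero_left (hFsys z hz),
    mconj_sub, mconj_mul, mconj_mul, mconj_inv_of_mconj_eq_neg (hωFFim z hz) (hinv z hz),
    hωΨFim z hz]
  noncomm_ring

/-- Theorem 1, first covariance relation:
Ψ̃ = Ψ − F·ω_{F,F⁺}⁻¹·ω_{Ψ,F⁺} satisfies ∂_z̄ Ψ̃ + B̃·conj Ψ̃ = 0 with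
B̃ = B + F·ω_{F,F⁺}⁻¹·F⁺. -/
theorem moutard_covariance_first {N : ℕ} (D : Set ℂ) (hD : IsOpen D)
    (B Ψ F Fp ωFF ωΨF : ℂ → Matrix (Fin N) (Fin N) ℂ)
    (hB : MatDiffOn B D) (hΨ : MatDiffOn Ψ D) (hF : MatDiffOn F D)
    (hFp : MatDiffOn Fp D) (hωFF : MatDiffOn ωFF D) (hωΨF : MatDiffOn ωΨF D)
    (hΨsys : ∀ z ∈ D, wDzbar Ψ z + B z * mconj (Ψ z) = 0)
    (hFsys : ∀ z ∈ D, wDzbar F z + B z * mconj (F z) = 0)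
    (hFpsys : ∀ z ∈ D, wDz Fp z - mconj (Fp z) * B z = 0)
    (hωFFzbar : ∀ z ∈ D, wDzbar ωFF z = Fp z * mconj (F z))
    (hωFFz : ∀ z ∈ D, wDz ωFF z = - (mconj (Fp z) * F z))
    (hωFFim : ∀ z ∈ D, mconj (ωFF z) = - ωFF z)
    (hωΨFzbar : ∀ z ∈ D, wDzbar ωΨF z = Fp z * mconj (Ψ z))
    (hωΨFz : ∀ z ∈ D, wDz ωΨF z = - (mconj (Fp z) * Ψ z))
    (hωΨFim : ∀ z ∈ D, mconj (ωΨF z) = - ωΨF z)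
    (hinv : ∀ z ∈ D, IsUnit (ωFF z)) :
    ∀ z ∈ D,
      wDzbar (fun w => Ψ w - F w * (ωFF w)⁻¹ * ωΨF w) z
        + (B z + F z * (ωFF z)⁻¹ * Fp z)
          * mconj (Ψ z - F z * (ωFF z)⁻¹ * ωΨF z) = 0 :=
  moutard_covariance_first_general D B Ψ F Fp ωFF ωΨF hΨ hF hωFF hωΨF hΨsys hFsys hωFFzbar hωFFim
    hωΨFzbar hωΨFim hinv
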